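/- arXiv:2210.08756 — 5 statements merged into one kernel-verified Lean document; each statement's English description precedes it below -/
import Mathlib

section
/- Let x be a down beat point of a finite T0-space X, i.e., there exists z ∈ X with ↓x \ {x} = ↓z (down-sets taken with respect to the specialization order). Then the retraction r : X → X \ {x} sending x to z and fixing all other points is continuous, and X \ {x} (with the subspace topology) is a strong deformation retract of X. -/
open Classical in

/-- Stong's down beat point removal. If `x` is a down beat point of a finite T0-space `X`
(there is `z` with `↓x \ {x} = ↓z` for the specialization order), then the retraction
sending `x` to `z` and fixing all other points is continuous, and `X \ {x}` is a strong
deformation retract of `X` (the identity is homotopic to the retraction rel `X \ {x}`). -/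
theorem downBeatPoint_strong_deformation_retract
    {X : Type*} [TopologicalSpace X] [Finite X] [T0Space X] (x z : X) (hzx : z ≠ x)
    (hbeat : {y : X | y ∈ closure ({x} : Set X) ∧ y ≠ x} =
      {y : X | y ∈ closure ({z} : Set X)}) :
    Continuous (fun y : X => if y = x then z else y) ∧
      ∃ r : C(X, X), (∀ y : X, r y = if y = x then z else y) ∧
        Nonempty ((ContinuousMap.id X).HomotopyRel r {y : X | y ≠ x}) := by
  set r : X → X := fun y => if y = x then z else y with hr
  -- translate the beat point hypothesis into specializations
  have hb : ∀ y : X, (x ⤳ y ∧ y ≠ x) ↔ z ⤳ y := by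
    intro y
    have := Set.ext_iff.mp hbeat y
    simpa [specializes_iff_mem_closure] using this
  have hxz : x ⤳ z := ((hb z).mpr specializes_rfl).1
  -- r preserves specialization
  have rspec : ∀ a b : X, a ⤳ b → r a ⤳ r b := by
    intro a b hab
    by_cases ha : a = x <;> by_cases hbx : b = x
    · subst ha; subst hbx; exact specializes_rfl
    · simp only [hr, if_pos ha, if_neg hbx]
      exact (hb b).mp ⟨ha ▸ hab, hbx⟩
    · simp only [hr, if_neg ha, if_pos hbx]
      exact (hbx ▸ hab).trans hxz
    · simpa [hr, ha, hbx] using hab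
  -- r is continuous (Alexandrov-discrete since X is finite)
  have hcont : Continuous r := by
    rw [continuous_def]
    intro U hU
    rw [isOpen_iff_forall_specializes] at hU ⊢
    intro a b hab hbU
    exact hU _ _ (rspec a b hab) hbU
  have hkey : ∀ (y : X) (U : Set X), IsOpen U → r y ∈ U → y ∈ U := by
    intro y U hU hry
    by_cases h : y = x
    · subst h
      simp only [hr, if_pos rfl] at hry
      exact hxz.mem_open hU hry
    · simpa [hr, h] using hry
  -- the homotopy
  have hFcont : Continuous (fun p : unitInterval × X => if p.1 = 1 then r p.2 else p.2) := by
    rw [continuous_def]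
    intro U hU
    have heq : (fun p : unitInterval × X => if p.1 = 1 then r p.2 else p.2) ⁻¹' U =
        (({(1 : unitInterval)}ᶜ : Set unitInterval) ×ˢ U) ∪
          ((Set.univ : Set unitInterval) ×ˢ (r ⁻¹' U)) := by
      ext ⟨t, y⟩
      by_cases ht : t = 1
      · simp [ht]
      · simp only [Set.mem_preimage, if_neg ht, Set.mem_union, Set.mem_prod,
          Set.mem_compl_iff, Set.mem_singleton_iff, ht, not_false_iff, true_and,
          Set.mem_univ]
        constructor
        · exact Or.inl
        · rintro (h | h)
          · exact h
          · exact hkey y U hU h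
    rw [heq]
    exact (isOpen_compl_singleton.prod hU).union
      (isOpen_univ.prod (hcont.isOpen_preimage U hU))
  have h01 : (0 : unitInterval) ≠ 1 := by
    intro h
    exact zero_ne_one (congrArg Subtype.val h)
  refine ⟨hcont, ⟨r, hcont⟩, fun y => rfl, ⟨{
    toFun := fun p => if p.1 = 1 then r p.2 else p.2
    continuous_toFun := hFcont
    map_zero_left := fun y => by simp [h01]
    map_one_left := fun y => by simp [ContinuousMap.coe_mk]
    prop' := ?_ }⟩⟩
  intro t y hy
  by_cases ht : t = 1
  · simp only [ContinuousMap.coe_mk, if_pos ht, ContinuousMap.id_apply]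
    exact if_neg hy
  · simp [ht]
end

section
/- Let x be an up beat point of a finite T0-space X, i.e., there exists z ∈ X with ↑x \ {x} = ↑z. Then the map r : X → X \ {x} defined by r(x) = z and r(y) = y otherwise is continuous and order-preserving, and the inclusion X \ {x} → X is a homotopy equivalence. -/
open Classical in
/-- Homotopy between two continuous maps when `f a ⤳ g a` for all `a`. -/
noncomputable def homotopyOfSpecializes {X Y : Type*} [TopologicalSpace X] [TopologicalSpace Y]
    (f g : C(X, Y)) (h : ∀ a, f a ⤳ g a) : ContinuousMap.Homotopy f g where
  toFun p := if p.1 = 1 then g p.2 else f p.2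
  continuous_toFun := by
    rw [continuous_def]
    intro U hU
    have : (fun p : unitInterval × X => if p.1 = 1 then g p.2 else f p.2) ⁻¹' U =
        (({1}ᶜ : Set unitInterval) ×ˢ (f ⁻¹' U)) ∪ ((Set.univ) ×ˢ (g ⁻¹' U)) := by
      ext ⟨t, a⟩
      by_cases ht : t = 1
      · simp [ht]
      · simp only [Set.mem_preimage, Set.mem_union, Set.mem_prod, if_neg ht]
        constructor
        · intro hf
          exact Or.inl ⟨ht, hf⟩
        · rintro (⟨-, hf⟩ | ⟨-, hg⟩)
          · exact hf
          · exact (h a).mem_open hU hg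
    rw [this]
    exact ((isOpen_compl_iff.2 isClosed_singleton).prod (hU.preimage f.continuous)).union
      (isOpen_univ.prod (hU.preimage g.continuous))
  map_zero_left a := by
    have : (0 : unitInterval) ≠ 1 := fun h => zero_ne_one (congrArg Subtype.val h)
    simp [this]
  map_one_left a := by simp

open Classical in

/-- Stong's up beat point removal. If `x` is an up beat point of a finite T0-space `X`
(there is `z` with `↑x \ {x} = ↑z` for the specialization order `a ≤ b ↔ a ∈ closure {b}`),
then the map sending `x` to `z` and fixing all other points is continuous and monotone, and
the inclusion `X \ {x} → X` is a homotopy equivalence. -/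
theorem upBeatPoint_inclusion_homotopyEquiv
    {X : Type*} [TopologicalSpace X] [Finite X] [T0Space X] (x z : X) (hzx : z ≠ x)
    (hbeat : {y : X | x ∈ closure ({y} : Set X) ∧ y ≠ x} =
      {y : X | z ∈ closure ({y} : Set X)}) :
    Continuous (fun y : X => if y = x then z else y) ∧
      (∀ a b : X, a ∈ closure ({b} : Set X) →
        (if a = x then z else a) ∈ closure ({if b = x then z else b} : Set X)) ∧
      ∃ e : ContinuousMap.HomotopyEquiv {y : X // y ≠ x} X,
        ∀ y : {y : X // y ≠ x}, e.toFun y = y.val := by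
  have h1 : ∀ y : X, (x ∈ closure ({y} : Set X) ∧ y ≠ x) ↔ z ∈ closure ({y} : Set X) :=
    fun y => Set.ext_iff.mp hbeat y
  -- `z ⤳ x`
  have hzsx : z ⤳ x := by
    have := ((h1 z).mpr (subset_closure rfl)).1
    exact specializes_iff_mem_closure.mpr this
  set r : X → X := fun y : X => if y = x then z else y with hr_def
  -- monotonicity
  have mono : ∀ a b : X, a ∈ closure ({b} : Set X) →
      (if a = x then z else a) ∈ closure ({if b = x then z else b} : Set X) := by
    intro a b hab
    by_cases ha : a = x <;> by_cases hb : b = x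
    · simp [ha, hb]; exact subset_closure rfl
    · simp only [ha, if_pos rfl, if_neg hb]
      exact (h1 b).mp ⟨ha ▸ hab, hb⟩
    · simp only [if_neg ha, hb, if_pos rfl]
      have hxa : x ⤳ a := specializes_iff_mem_closure.mpr (hb ▸ hab)
      exact specializes_iff_mem_closure.mp (hzsx.trans hxa)
    · simpa [ha, hb] using hab
  -- specialization-preserving
  have spec : ∀ a b : X, b ⤳ a → r b ⤳ r a := by
    intro a b hba
    exact specializes_iff_mem_closure.mpr (mono a b (specializes_iff_mem_closure.mp hba))
  -- continuity
  have hrc : Continuous r := by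
    rw [continuous_def]
    intro U hU
    rw [isOpen_iff_forall_specializes]
    intro p q hpq hq
    exact (spec q p hpq).mem_open hU hq
  refine ⟨hrc, mono, ?_⟩
  -- the retraction into the subtype
  have hrne : ∀ a : X, r a ≠ x := by
    intro a
    by_cases h : a = x
    · simpa [hr_def, h] using hzx
    · simpa [hr_def, h] using h
  set R : C(X, {y : X // y ≠ x}) := ⟨fun a => ⟨r a, hrne a⟩, hrc.subtype_mk _⟩ with hR
  set i : C({y : X // y ≠ x}, X) := ⟨Subtype.val, continuous_subtype_val⟩ with hi
  have hRi : R.comp i = ContinuousMap.id _ := by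
    ext y
    simp [hR, hi, hr_def, y.2]
  have hspec : ∀ a : X, (i.comp R) a ⤳ (ContinuousMap.id X) a := by
    intro a
    by_cases h : a = x
    · simpa [hR, hi, hr_def, h] using hzsx
    · simp only [hR, hi, hr_def, ContinuousMap.comp_apply, ContinuousMap.coe_mk,
        ContinuousMap.id_apply, if_neg h]
      exact specializes_refl a
  refine ⟨⟨i, R, ?_, ?_⟩, fun y => rfl⟩
  · exact hRi ▸ ContinuousMap.Homotopic.refl _
  · exact ⟨homotopyOfSpecializes _ _ hspec⟩
end

section
/- Let X be a finite T0-space and x ∈ X a point such that ↑x \ {x} (with the subspace topology) is contractible (an 'up weak point'). Then the inclusion X \ {x} ↪ X is a weak homotopy equivalence. -/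
open scoped Topology Topology.Homotopy unitInterval
open Topology

section FinBasics
variable {X : Type*} [TopologicalSpace X]

/-- The minimal open neighbourhood of a point in a finite space. -/
def minOpen [Finite X] (x : X) : Set X := ⋂₀ {U : Set X | IsOpen U ∧ x ∈ U}

theorem isOpen_minOpen [Finite X] (x : X) : IsOpen (minOpen x) :=
  Set.Finite.isOpen_sInter (Set.toFinite _) fun _ hU => hU.1

theorem mem_minOpen_self [Finite X] (x : X) : x ∈ minOpen x :=
  Set.mem_sInter.mpr fun _ hU => hU.2

theorem minOpen_subset [Finite X] {x : X} {U : Set X} (hU : IsOpen U) (hx : x ∈ U) :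
    minOpen x ⊆ U := fun _ h => Set.mem_sInter.mp h U ⟨hU, hx⟩

theorem mem_minOpen_iff [Finite X] {x y : X} :
    y ∈ minOpen x ↔ x ∈ closure ({y} : Set X) := by
  rw [mem_closure_iff]
  constructor
  · intro h o ho hxo
    exact ⟨y, Set.mem_sInter.mp h o ⟨ho, hxo⟩, rfl⟩
  · intro h
    refine Set.mem_sInter.mpr fun U hU => ?_
    obtain ⟨z, hz, hz'⟩ := h U hU.1 hU.2
    rwa [Set.mem_singleton_iff.mp hz'] at hz

theorem specializes_of_mem_minOpen {X : Type*} [TopologicalSpace X] [Finite X] {x y : X}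
    (h : y ∈ minOpen x) : y ⤳ x := by
  rw [specializes_iff_forall_open]
  exact fun s hs hxs => Set.mem_sInter.mp h s ⟨hs, hxs⟩

end FinBasics

section Jump
variable {Z T : Type*} [TopologicalSpace Z] [TopologicalSpace T]

theorem jump_continuous (u v : C(Z, T)) (h : ∀ z, u z ⤳ v z)
    {c : ↥I} (hc : IsOpen {t : ↥I | t ≠ c}) :
    Continuous fun p : ↥I × Z => if p.1 = c then v p.2 else u p.2 := by
  rw [continuous_def]
  intro U hU
  have hsub : v ⁻¹' U ⊆ u ⁻¹' U := fun z hz =>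
    (specializes_iff_forall_open.mp (h z)) U hU hz
  have hpre : (fun p : ↥I × Z => if p.1 = c then v p.2 else u p.2) ⁻¹' U =
      (Set.univ ×ˢ (v ⁻¹' U)) ∪ ({t : ↥I | t ≠ c} ×ˢ (u ⁻¹' U)) := by
    ext ⟨t, z⟩
    by_cases ht : t = c
    · subst ht
      simp only [Set.mem_preimage, if_pos rfl, Set.mem_union, Set.mem_prod,
        Set.mem_univ, true_and, Set.mem_setOf_eq]
      constructor
      · exact fun hz => Or.inl hz
      · rintro (hz | ⟨hne, _⟩)
        · exact hz
        · exact absurd rfl hne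
    · simp only [Set.mem_preimage, if_neg ht, Set.mem_union, Set.mem_prod, Set.mem_univ,
        true_and, Set.mem_setOf_eq]
      constructor
      · intro hz; exact Or.inr ⟨ht, hz⟩
      · rintro (hz | ⟨-, hz⟩)
        · exact hsub hz
        · exact hz
  rw [hpre]
  exact (isOpen_univ.prod (hU.preimage v.continuous)).union (hc.prod (hU.preimage u.continuous))

/-- Instant jump at time 0: a homotopy from `v` to `u` when `u z ⤳ v z` for all `z`. -/
noncomputable def jumpHomotopy₀ (u v : C(Z, T)) (h : ∀ z, u z ⤳ v z) :
    ContinuousMap.Homotopy v u where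
  toFun := fun p => if p.1 = 0 then v p.2 else u p.2
  continuous_toFun := jump_continuous u v h isOpen_ne
  map_zero_left := fun z => by simp
  map_one_left := fun z => by norm_num

/-- Instant jump at time 1: a homotopy from `u` to `v` when `u z ⤳ v z` for all `z`. -/
noncomputable def jumpHomotopy₁ (u v : C(Z, T)) (h : ∀ z, u z ⤳ v z) :
    ContinuousMap.Homotopy u v where
  toFun := fun p => if p.1 = 1 then v p.2 else u p.2
  continuous_toFun := by
    have : Continuous fun p : ↥I × Z => if p.1 = (1 : ↥I) then v p.2 else u p.2 :=
      jump_continuous u v h isOpen_ne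
    exact this
  map_zero_left := fun z => by norm_num
  map_one_left := fun z => by simp

theorem jumpHomotopy₀_apply (u v : C(Z, T)) (h : ∀ z, u z ⤳ v z) (t : ↥I) (z : Z) :
    jumpHomotopy₀ u v h (t, z) = v z ∨ jumpHomotopy₀ u v h (t, z) = u z := by
  by_cases ht : t = 0
  · left; show (if t = 0 then v z else u z) = v z; simp [ht]
  · right; show (if t = 0 then v z else u z) = u z; simp [ht]

theorem jumpHomotopy₁_apply (u v : C(Z, T)) (h : ∀ z, u z ⤳ v z) (t : ↥I) (z : Z) :
    jumpHomotopy₁ u v h (t, z) = v z ∨ jumpHomotopy₁ u v h (t, z) = u z := by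
  by_cases ht : t = 1
  · left; show (if t = 1 then v z else u z) = v z; simp [ht]
  · right; show (if t = 1 then v z else u z) = u z; simp [ht]

end Jump

section Fence
variable {D : Type*} [TopologicalSpace D]

/-- One step of a fence: two maps pointwise comparable in the specialization preorder. -/
def FenceStep (u v : C(D, D)) : Prop :=
  (∀ z, u z ⤳ v z) ∨ (∀ z, v z ⤳ u z)

theorem FenceStep.symm {u v : C(D, D)} (h : FenceStep u v) : FenceStep v u := Or.symm h

theorem exists_fence [Finite D] [ContractibleSpace D] :
    ∃ c₀ : D, Relation.ReflTransGen FenceStep (ContinuousMap.id D)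
      (ContinuousMap.const D c₀) := by
  obtain ⟨c₀, ⟨H⟩⟩ := id_nullhomotopic D
  refine ⟨c₀, ?_⟩
  set Hc : ↥I → C(D, D) := fun t => ⟨fun z => H (t, z),
    H.continuous.comp (Continuous.prodMk_right t)⟩ with hHc
  have key : ∀ t : ↥I, ∃ N : Set ↥I, IsOpen N ∧ t ∈ N ∧
      ∀ s ∈ N, FenceStep (Hc t) (Hc s) := by
    intro t
    refine ⟨⋂ z : D, {s : ↥I | H (s, z) ∈ minOpen (H (t, z))}, ?_, ?_, ?_⟩
    · exact isOpen_iInter_of_finite fun z =>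
        (isOpen_minOpen _).preimage (H.continuous.comp (continuous_id.prodMk
          continuous_const))
    · exact Set.mem_iInter.mpr fun z => mem_minOpen_self _
    · intro s hs
      exact Or.inr fun z => specializes_of_mem_minOpen (Set.mem_iInter.mp hs z)
  set S : Set ↥I := {t | Relation.ReflTransGen FenceStep (Hc t)
    (ContinuousMap.const D c₀)} with hS
  have h1 : (1 : ↥I) ∈ S := by
    have : Hc 1 = ContinuousMap.const D c₀ := ContinuousMap.ext fun z => H.apply_one z
    simp only [hS, Set.mem_setOf_eq, this]
    exact Relation.ReflTransGen.refl
  have hopen : IsOpen S := by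
    rw [isOpen_iff_mem_nhds]
    intro t ht
    obtain ⟨N, hNo, hNt, hNs⟩ := key t
    exact Filter.mem_of_superset (hNo.mem_nhds hNt) fun s hs =>
      Relation.ReflTransGen.head (hNs s hs).symm ht
  have hclosed : IsClosed S := by
    rw [← isOpen_compl_iff, isOpen_iff_mem_nhds]
    intro t ht
    obtain ⟨N, hNo, hNt, hNs⟩ := key t
    refine Filter.mem_of_superset (hNo.mem_nhds hNt) fun s hs hsS => ht ?_
    exact Relation.ReflTransGen.head (hNs s hs) hsS
  have : S = Set.univ := IsClopen.eq_univ ⟨hclosed, hopen⟩ ⟨1, h1⟩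
  have h0 : (0 : ↥I) ∈ S := this ▸ Set.mem_univ _
  have : Hc 0 = ContinuousMap.id D := ContinuousMap.ext fun z => H.apply_zero z
  rwa [hS, Set.mem_setOf_eq, this] at h0

end Fence

section Reparam

/-- The reparametrisation `t ↦ 2t` clamped to `[0,1]`. -/
noncomputable def dblLo : C(↥I, ↥I) :=
  ⟨fun t => Set.projIcc (0:ℝ) 1 zero_le_one (2*(t:ℝ)),
    continuous_projIcc.comp (continuous_const.mul continuous_subtype_val)⟩

/-- The reparametrisation `t ↦ 2t - 1` clamped to `[0,1]`. -/
noncomputable def dblHi : C(↥I, ↥I) :=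
  ⟨fun t => Set.projIcc (0:ℝ) 1 zero_le_one (2*(t:ℝ)-1),
    continuous_projIcc.comp ((continuous_const.mul continuous_subtype_val).sub
      continuous_const)⟩

theorem dblLo_zero : dblLo 0 = 0 := by
  show Set.projIcc (0:ℝ) 1 zero_le_one (2*((0:↥I):ℝ)) = 0
  norm_num

theorem dblLo_of_half_le {t : ↥I} (h : (1:ℝ)/2 ≤ (t:ℝ)) : dblLo t = 1 := by
  show Set.projIcc (0:ℝ) 1 zero_le_one (2*(t:ℝ)) = 1
  rw [Set.projIcc_of_right_le zero_le_one (by linarith)]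
  rfl

theorem dblHi_of_le_half {t : ↥I} (h : (t:ℝ) ≤ (1:ℝ)/2) : dblHi t = 0 := by
  show Set.projIcc (0:ℝ) 1 zero_le_one (2*(t:ℝ)-1) = 0
  rw [Set.projIcc_of_le_left zero_le_one (by linarith)]
  rfl

theorem dblHi_one : dblHi 1 = 1 := by
  show Set.projIcc (0:ℝ) 1 zero_le_one (2*((1:↥I):ℝ)-1) = 1
  rw [Set.projIcc_of_right_le zero_le_one (by norm_num)]
  rfl

end Reparam

section Cone
variable {X : Type*} [TopologicalSpace X] [Finite X] [T0Space X] (x : X)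


/-- Any open subset of the cone `minOpen x` containing `x` is everything. -/
theorem cone_open_eq_univ {U : Set ↥(minOpen x)} (hU : IsOpen U)
    (hx : (⟨x, mem_minOpen_self x⟩ : ↥(minOpen x)) ∈ U) : U = Set.univ := by
  obtain ⟨V, hV, rfl⟩ := isOpen_induced_iff.mp hU
  have : minOpen x ⊆ V := minOpen_subset hV hx
  exact Set.eq_univ_of_forall fun w => this w.prop

/-- The apex singleton is closed in the cone. -/
theorem cone_isOpen_ne : IsOpen {w : ↥(minOpen x) | (w : X) ≠ x} := by
  rw [← isClosed_compl_iff]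
  have : {w : ↥(minOpen x) | (w : X) ≠ x}ᶜ =
      Subtype.val ⁻¹' (closure ({x} : Set X)) := by
    ext w
    simp only [Set.mem_compl_iff, Set.mem_setOf_eq, not_not, Set.mem_preimage]
    constructor
    · intro h
      rw [h]
      exact subset_closure rfl
    · intro hw
      have h1 : x ⤳ (w : X) := specializes_iff_mem_closure.mpr hw
      have h2 : (w : X) ⤳ x := specializes_iff_mem_closure.mpr (mem_minOpen_iff.mp w.prop)
      exact (h2.antisymm h1).eq
  rw [this]
  exact isClosed_closure.preimage continuous_subtype_val

/-- Inclusion of the deleted cone into the cone. -/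
def coneIncl : C(↥{y : X | x ∈ closure ({y} : Set X) ∧ y ≠ x}, ↥(minOpen x)) :=
  ⟨fun y => ⟨(y : X), mem_minOpen_iff.mpr y.prop.1⟩,
    continuous_subtype_val.subtype_mk _⟩

theorem coneIncl_ne (y : ↥{y : X | x ∈ closure ({y} : Set X) ∧ y ≠ x}) : ((coneIncl x y : ↥(minOpen x)) : X) ≠ x := y.prop.2

/-- Pull a non-apex point of the cone back to the deleted cone. -/
def toD (w : ↥(minOpen x)) (h : (w : X) ≠ x) : ↥{y : X | x ∈ closure ({y} : Set X) ∧ y ≠ x} := ⟨(w : X), ⟨mem_minOpen_iff.mp w.prop, h⟩⟩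

open Classical in
/-- Lift a self-map of the deleted cone to the cone, fixing the apex. -/
noncomputable def liftMap (u : C(↥{y : X | x ∈ closure ({y} : Set X) ∧ y ≠ x}, ↥{y : X | x ∈ closure ({y} : Set X) ∧ y ≠ x})) : C(↥(minOpen x), ↥(minOpen x)) where
  toFun w := if h : (w : X) = x then w else coneIncl x (u (toD x w h))
  continuous_toFun := by
    rw [continuous_def]
    intro U hU
    by_cases hxU : (⟨x, mem_minOpen_self x⟩ : ↥(minOpen x)) ∈ U
    · have hUuniv : U = Set.univ := cone_open_eq_univ x hU hxU
      subst hUuniv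
      simp only [Set.preimage_univ]
      exact isOpen_univ
    · -- preimage is contained in the open part and is the image of an open set
      set m : ↥{w : ↥(minOpen x) | (w : X) ≠ x} → ↥(minOpen x) :=
        fun w => coneIncl x (u (toD x w.val w.prop)) with hm
      have hmc : Continuous m := by
        apply (coneIncl x).continuous.comp
        apply u.continuous.comp
        exact ((continuous_subtype_val.comp continuous_subtype_val).subtype_mk _)
      have hemb : IsOpenEmbedding (Subtype.val : ↥{w : ↥(minOpen x) | (w : X) ≠ x} → ↥(minOpen x)) :=
        (cone_isOpen_ne x).isOpenEmbedding_subtypeVal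
      have hpre : (fun w : ↥(minOpen x) => if h : (w : X) = x then w else
          coneIncl x (u (toD x w h))) ⁻¹' U = Subtype.val '' (m ⁻¹' U) := by
        ext w
        simp only [Set.mem_preimage, Set.mem_image]
        constructor
        · intro hw
          by_cases h : (w : X) = x
          · rw [dif_pos h] at hw
            have : w = ⟨x, mem_minOpen_self x⟩ := Subtype.ext h
            rw [this] at hw
            exact absurd hw hxU
          · rw [dif_neg h] at hw
            exact ⟨⟨w, h⟩, hw, rfl⟩
        · rintro ⟨⟨w', hw'⟩, hw'U, rfl⟩
          rw [dif_neg hw']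
          exact hw'U
      rw [hpre]
      exact hemb.isOpenMap _ (hU.preimage hmc)

open Classical in
theorem liftMap_apex (u : C(↥{y : X | x ∈ closure ({y} : Set X) ∧ y ≠ x}, ↥{y : X | x ∈ closure ({y} : Set X) ∧ y ≠ x})) :
    liftMap x u ⟨x, mem_minOpen_self x⟩ = ⟨x, mem_minOpen_self x⟩ := by
  show dite _ _ _ = _
  rw [dif_pos rfl]

open Classical in
theorem liftMap_ne (u : C(↥{y : X | x ∈ closure ({y} : Set X) ∧ y ≠ x}, ↥{y : X | x ∈ closure ({y} : Set X) ∧ y ≠ x})) (w : ↥(minOpen x)) (h : (w : X) ≠ x) :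
    ((liftMap x u w : ↥(minOpen x)) : X) ≠ x := by
  show ((dite _ _ _ : ↥(minOpen x)) : X) ≠ x
  rw [dif_neg h]
  exact coneIncl_ne x _

open Classical in
theorem liftMap_id : liftMap x (ContinuousMap.id _) = ContinuousMap.id ↥(minOpen x) := by
  ext w
  show ((dite _ _ _ : ↥(minOpen x)) : X) = (w : X)
  by_cases h : (w : X) = x
  · rw [dif_pos h]
  · rw [dif_neg h]; rfl

open Classical in
theorem liftMap_specializes {u v : C(↥{y : X | x ∈ closure ({y} : Set X) ∧ y ≠ x}, ↥{y : X | x ∈ closure ({y} : Set X) ∧ y ≠ x})} (h : ∀ z, u z ⤳ v z) (w : ↥(minOpen x)) :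
    liftMap x u w ⤳ liftMap x v w := by
  by_cases hw : (w : X) = x
  · have hw' : w = ⟨x, mem_minOpen_self x⟩ := Subtype.ext hw
    rw [hw', liftMap_apex, liftMap_apex]
  · show (dite _ _ _ : ↥(minOpen x)) ⤳ (dite _ _ _ : ↥(minOpen x))
    rw [dif_neg hw, dif_neg hw]
    exact (h _).map (coneIncl x).continuous

/-- The apex specializes-to every point of the cone (it is in every open set's closure
relation suitably): every open set containing any point's lift contains the apex image. -/
theorem specializes_to_apex (w : ↥(minOpen x)) :
    w ⤳ (⟨x, mem_minOpen_self x⟩ : ↥(minOpen x)) := by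
  rw [specializes_iff_forall_open]
  intro U hU hxU
  have := cone_open_eq_univ x hU hxU
  rw [this]; trivial

end Cone

section Psi
variable {X : Type*} [TopologicalSpace X] [Finite X] [T0Space X] (x : X)

theorem exists_psi
    (hD : ContractibleSpace ↥{y : X | x ∈ closure ({y} : Set X) ∧ y ≠ x}) :
    ∃ Ψ : C(↥I × ↥(minOpen x), ↥(minOpen x)),
      (∀ w, Ψ (0, w) = w) ∧
      (∀ (t : ↥I) (w : ↥(minOpen x)), (w : X) ≠ x → ((Ψ (t, w)) : X) ≠ x) ∧
      (∀ w : ↥(minOpen x), ((Ψ (1, w)) : X) ≠ x) := by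
  classical
  obtain ⟨c₀, fence⟩ := exists_fence (D := ↥{y : X | x ∈ closure ({y} : Set X) ∧ y ≠ x})
  have main : ∀ u : C(↥{y : X | x ∈ closure ({y} : Set X) ∧ y ≠ x},
        ↥{y : X | x ∈ closure ({y} : Set X) ∧ y ≠ x}),
      Relation.ReflTransGen FenceStep u (ContinuousMap.const _ c₀) →
      ∃ Ψ : C(↥I × ↥(minOpen x), ↥(minOpen x)),
        (∀ w, Ψ (0, w) = liftMap x u w) ∧
        (∀ (t : ↥I) (w : ↥(minOpen x)), (w : X) ≠ x → ((Ψ (t, w)) : X) ≠ x) ∧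
        (∀ w : ↥(minOpen x), ((Ψ (1, w)) : X) ≠ x) := by
    intro u hu
    induction hu using Relation.ReflTransGen.head_induction_on with
    | refl =>
      have hcomp : ∀ w : ↥(minOpen x),
          (coneIncl x c₀) ⤳ liftMap x (ContinuousMap.const _ c₀) w := by
        intro w
        by_cases hw : (w : X) = x
        · have hww : w = ⟨x, mem_minOpen_self x⟩ := Subtype.ext hw
          rw [hww, liftMap_apex]
          exact specializes_to_apex x _
        · have hlw : liftMap x (ContinuousMap.const _ c₀) w = coneIncl x c₀ := by
            show dite _ _ _ = _
            rw [dif_neg hw]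
            rfl
          rw [hlw]
      refine ⟨(jumpHomotopy₀ (ContinuousMap.const _ (coneIncl x c₀))
          (liftMap x (ContinuousMap.const _ c₀)) hcomp).toContinuousMap,
        fun w => (jumpHomotopy₀ (ContinuousMap.const _ (coneIncl x c₀))
          (liftMap x (ContinuousMap.const _ c₀)) hcomp).apply_zero w, ?_, fun w => ?_⟩
      · intro t w hw
        rcases jumpHomotopy₀_apply (ContinuousMap.const _ (coneIncl x c₀))
            (liftMap x (ContinuousMap.const _ c₀)) hcomp t w with hh | hh
        · show (((jumpHomotopy₀ (ContinuousMap.const _ (coneIncl x c₀))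
              (liftMap x (ContinuousMap.const _ c₀)) hcomp) (t, w)) : X) ≠ x
          rw [hh]
          exact liftMap_ne x _ w hw
        · show (((jumpHomotopy₀ (ContinuousMap.const _ (coneIncl x c₀))
              (liftMap x (ContinuousMap.const _ c₀)) hcomp) (t, w)) : X) ≠ x
          rw [hh]
          exact coneIncl_ne x c₀
      · show (((jumpHomotopy₀ (ContinuousMap.const _ (coneIncl x c₀))
            (liftMap x (ContinuousMap.const _ c₀)) hcomp) (1, w)) : X) ≠ x
        rw [ContinuousMap.Homotopy.apply_one]
        exact coneIncl_ne x c₀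
    | @head a c h' htail ih =>
      obtain ⟨Ψ', h0', hpres', hend'⟩ := ih
      have hJ : ∃ J : ContinuousMap.Homotopy (liftMap x a) (liftMap x c),
          ∀ t w, J (t, w) = liftMap x a w ∨ J (t, w) = liftMap x c w := by
        rcases h' with h1 | h2
        · exact ⟨jumpHomotopy₁ _ _ (liftMap_specializes x h1), fun t w =>
            (jumpHomotopy₁_apply _ _ (liftMap_specializes x h1) t w).symm⟩
        · exact ⟨jumpHomotopy₀ _ _ (liftMap_specializes x h2), fun t w =>
            jumpHomotopy₀_apply _ _ (liftMap_specializes x h2) t w⟩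
      obtain ⟨J, Jval⟩ := hJ
      have hcont : Continuous fun p : ↥I × ↥(minOpen x) =>
          if ((p.1 : ↥I) : ℝ) ≤ 1/2 then J (dblLo p.1, p.2) else Ψ' (dblHi p.1, p.2) := by
        refine Continuous.if_le ?_ ?_ ?_ continuous_const ?_
        · exact J.continuous.comp ((dblLo.continuous.comp continuous_fst).prodMk
            continuous_snd)
        · exact Ψ'.continuous.comp ((dblHi.continuous.comp continuous_fst).prodMk
            continuous_snd)
        · exact continuous_subtype_val.comp continuous_fst
        · intro p hp
          rw [dblLo_of_half_le (le_of_eq hp.symm), dblHi_of_le_half (le_of_eq hp),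
            J.apply_one, h0']
      refine ⟨⟨fun p => if ((p.1 : ↥I) : ℝ) ≤ 1/2 then J (dblLo p.1, p.2)
        else Ψ' (dblHi p.1, p.2), hcont⟩, fun w => ?_, ?_, fun w => ?_⟩
      · simp only [ContinuousMap.coe_mk]
        rw [if_pos (by norm_num : (((0:↥I)) : ℝ) ≤ 1/2), dblLo_zero, J.apply_zero]
      · intro t w hw
        simp only [ContinuousMap.coe_mk]
        by_cases hsplit : ((t : ↥I) : ℝ) ≤ 1/2
        · rw [if_pos hsplit]
          rcases Jval (dblLo t) w with hh | hh
          · rw [hh]; exact liftMap_ne x a w hw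
          · rw [hh]; exact liftMap_ne x c w hw
        · rw [if_neg hsplit]
          exact hpres' (dblHi t) w hw
      · simp only [ContinuousMap.coe_mk]
        rw [if_neg (by norm_num : ¬(((1:↥I)) : ℝ) ≤ 1/2), dblHi_one]
        exact hend' w
  obtain ⟨Ψ, h0, hpres, hend⟩ := main (ContinuousMap.id _) fence
  refine ⟨Ψ, fun w => ?_, hpres, hend⟩
  rw [h0, liftMap_id]
  rfl

end Psi

section Compress
variable {X : Type*} [TopologicalSpace X] [Finite X] [T0Space X]

theorem minOpen_inter_closure_eq {x y : X} (h1 : y ∈ minOpen x)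
    (h2 : y ∈ closure ({x} : Set X)) : y = x := by
  have s1 : x ⤳ y := specializes_iff_mem_closure.mpr h2
  have s2 : y ⤳ x := specializes_iff_mem_closure.mpr (mem_minOpen_iff.mp h1)
  exact (s2.antisymm s1).eq

theorem exists_homotopyRel_avoiding' (x : X)
    (h : ContractibleSpace {y : X | x ∈ closure ({y} : Set X) ∧ y ≠ x})
    {K : Type*} [MetricSpace K] (L : Set K) (hL : IsClosed L) (f : C(K, X))
    (hfL : ∀ z ∈ L, f z ≠ x) :
    ∃ (g : C(K, X)) (_ : f.HomotopyRel g L), ∀ z, g z ≠ x := by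
  classical
  by_cases hA : ∀ z, f z ≠ x
  · exact ⟨f, ContinuousMap.HomotopyRel.refl f L, hA⟩
  push_neg at hA
  obtain ⟨Ψ, hΨ0, hΨpres, hΨend⟩ := exists_psi x h
  -- uniform small-time bound
  have hball : ∃ ε₀ > 0, ∀ t : ↥I, (t : ℝ) < ε₀ →
      ∀ w : ↥(minOpen x), ((Ψ (t, w)) : X) ∈ minOpen ((w : X)) := by
    have hSopen : IsOpen (⋂ w : ↥(minOpen x),
        {t : ↥I | ((Ψ (t, w)) : X) ∈ minOpen ((w : X))}) := by
      refine isOpen_iInter_of_finite fun w => ?_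
      exact (isOpen_minOpen _).preimage (continuous_subtype_val.comp
        (Ψ.continuous.comp (continuous_id.prodMk continuous_const)))
    have h0S : (0 : ↥I) ∈ ⋂ w : ↥(minOpen x),
        {t : ↥I | ((Ψ (t, w)) : X) ∈ minOpen ((w : X))} := by
      refine Set.mem_iInter.mpr fun w => ?_
      show ((Ψ (0, w)) : X) ∈ minOpen ((w : X))
      rw [hΨ0 w]
      exact mem_minOpen_self _
    obtain ⟨ε₀, hε₀pos, hballs⟩ := Metric.isOpen_iff.mp hSopen 0 h0S
    refine ⟨ε₀, hε₀pos, fun t ht w => ?_⟩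
    have hmem : t ∈ Metric.ball (0 : ↥I) ε₀ := by
      rw [Metric.mem_ball, Subtype.dist_eq, Real.dist_eq]
      have h00 : (((0 : ↥I)) : ℝ) = 0 := rfl
      rw [h00, sub_zero, abs_of_nonneg t.2.1]
      exact ht
    exact Set.mem_iInter.mp (hballs hmem) w
  obtain ⟨ε₀, hε₀pos, hsmall⟩ := hball
  set e : ℝ := min (ε₀ / 2) 1 with hedef
  have hepos : 0 < e := lt_min (by linarith) one_pos
  have helt : e < ε₀ := lt_of_le_of_lt (min_le_left _ _) (by linarith)
  have hele1 : e ≤ 1 := min_le_right _ _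
  -- sets
  set V : Set K := f ⁻¹' (minOpen x) with hVdef
  have hVopen : IsOpen V := (isOpen_minOpen x).preimage f.continuous
  set A : Set K := f ⁻¹' {x} with hAdef
  have hmemA : ∀ z, z ∈ A ↔ f z = x := fun z => Iff.rfl
  have hAV : A ⊆ V := fun z hz => by
    show f z ∈ minOpen x
    rw [(hmemA z).mp hz]; exact mem_minOpen_self x
  have hAne : A.Nonempty := by
    obtain ⟨z, hz⟩ := hA
    exact ⟨z, hz⟩
  have hclA : closure A ⊆ f ⁻¹' (closure ({x} : Set X)) := by
    refine closure_minimal ?_ (isClosed_closure.preimage f.continuous)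
    exact fun z hz => subset_closure ((hmemA z).mp hz)
  have hclAV : ∀ z ∈ V, z ∈ closure A → z ∈ A := by
    intro z hzV hzcl
    exact (hmemA z).mpr (minOpen_inter_closure_eq hzV (hclA hzcl))
  set T : Set K := {z | z ∉ V ∧ f z ∉ closure ({x} : Set X)} with hTdef
  set B₁ : Set K := closure T ∪ L with hB₁def
  have hB₁closed : IsClosed B₁ := isClosed_closure.union hL
  have hAB₁ : ∀ z ∈ A, z ∉ B₁ := by
    intro z hzA hzB
    rcases hzB with hzT | hzL
    · obtain ⟨w, hwV, hwT⟩ := mem_closure_iff.mp hzT V hVopen (hAV hzA)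
      exact hwT.1 hwV
    · exact hfL z hzL ((hmemA z).mp hzA)
  -- the cutoff function
  obtain ⟨νK, hνcont, hν01, hνA, hνL, hνT⟩ : ∃ νK : K → ℝ,
      (∀ z ∈ V, ContinuousAt νK z) ∧
      (∀ z ∈ V, 0 ≤ νK z ∧ νK z ≤ 1) ∧ (∀ z ∈ A, νK z = 1) ∧
      (∀ z, z ∈ L → z ∈ V → νK z = 0) ∧
      (∀ z₀ ∈ T, ∃ r > 0, ∀ z ∈ Metric.ball z₀ r, z ∈ V → νK z ≤ e) := by
    by_cases hB₁ne : B₁.Nonempty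
    · set dA : K → ℝ := fun z => Metric.infDist z A with hdA
      set dB : K → ℝ := fun z => Metric.infDist z B₁ with hdB
      have hdBpos : ∀ z ∈ A, 0 < dB z := by
        intro z hzA
        rcases eq_or_lt_of_le (Metric.infDist_nonneg (s := B₁) (x := z)) with heq | hlt
        · exfalso
          apply hAB₁ z hzA
          have := (Metric.mem_closure_iff_infDist_zero hB₁ne).mpr heq.symm
          rwa [hB₁closed.closure_eq] at this
        · exact hlt
      have hden : ∀ z ∈ V, 0 < e * dB z + dA z := by
        intro z hzV
        have h1 : 0 ≤ dA z := Metric.infDist_nonneg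
        have h2 : 0 ≤ dB z := Metric.infDist_nonneg
        rcases eq_or_lt_of_le h1 with heq | hlt
        · have hzA : z ∈ A := hclAV z hzV
            ((Metric.mem_closure_iff_infDist_zero hAne).mpr heq.symm)
          have h3 : 0 < e * dB z := mul_pos hepos (hdBpos z hzA)
          linarith
        · have : 0 ≤ e * dB z := mul_nonneg hepos.le h2
          linarith
      refine ⟨fun z => e * dB z / (e * dB z + dA z), ?_, ?_, ?_, ?_, ?_⟩
      · intro z hzV
        exact ((continuousAt_const.mul (Metric.continuous_infDist_pt B₁).continuousAt).div
          ((continuousAt_const.mul (Metric.continuous_infDist_pt B₁).continuousAt).add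
            (Metric.continuous_infDist_pt A).continuousAt) (hden z hzV).ne')
      · intro z hzV
        constructor
        · exact div_nonneg (mul_nonneg hepos.le Metric.infDist_nonneg) (hden z hzV).le
        · rw [div_le_one (hden z hzV)]
          have : (0:ℝ) ≤ dA z := Metric.infDist_nonneg
          linarith
      · intro z hzA
        have h0 : dA z = 0 := Metric.infDist_zero_of_mem hzA
        show e * dB z / (e * dB z + dA z) = 1
        rw [h0, add_zero, div_self (mul_pos hepos (hdBpos z hzA)).ne']
      · intro z hzL _
        have h0 : dB z = 0 := Metric.infDist_zero_of_mem (Or.inr hzL)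
        show e * dB z / (e * dB z + dA z) = 0
        rw [h0, mul_zero, zero_div]
      · intro z₀ hz₀
        have hr : 0 < dA z₀ := by
          rcases eq_or_lt_of_le (Metric.infDist_nonneg (s := A) (x := z₀)) with heq | hlt
          · exfalso
            have hcl : z₀ ∈ closure A :=
              (Metric.mem_closure_iff_infDist_zero hAne).mpr heq.symm
            exact hz₀.2 (hclA hcl)
          · exact hlt
        refine ⟨dA z₀ / 2, by linarith, fun z hz hzV => ?_⟩
        rw [Metric.mem_ball] at hz
        have hdBz : dB z ≤ dist z z₀ :=
          Metric.infDist_le_dist_of_mem (Or.inl (subset_closure hz₀))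
        have hdAz : dA z₀ ≤ dA z + dist z₀ z := Metric.infDist_le_infDist_add_dist
        rw [dist_comm z₀ z] at hdAz
        have hkey : dB z ≤ dA z := by linarith
        have hden' := hden z hzV
        rw [div_le_iff₀ hden']
        have h2 : (0:ℝ) ≤ dB z := Metric.infDist_nonneg
        have hx1 : e * dB z ≤ e * dA z := mul_le_mul_of_nonneg_left hkey hepos.le
        have hx2 : 0 ≤ e * (e * dB z) := mul_nonneg hepos.le (mul_nonneg hepos.le h2)
        nlinarith [hx1, hx2]
    · refine ⟨fun _ => 1, fun z _ => continuousAt_const,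
        fun z _ => ⟨zero_le_one, le_refl 1⟩, fun z _ => rfl, ?_, ?_⟩
      · intro z hzL hzV
        exact absurd ⟨z, Or.inr hzL⟩ hB₁ne
      · intro z₀ hz₀
        exact absurd ⟨z₀, Or.inl (subset_closure hz₀)⟩ hB₁ne
  -- bundle the time parameter
  have hbound : ∀ (t : ↥I) (z : K), z ∈ V → (t : ℝ) * νK z ∈ Set.Icc (0:ℝ) 1 := by
    intro t z hz
    constructor
    · exact mul_nonneg t.2.1 (hν01 z hz).1
    · calc (t : ℝ) * νK z ≤ 1 * 1 :=
            mul_le_mul t.2.2 (hν01 z hz).2 (hν01 z hz).1 zero_le_one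
        _ = 1 := by ring
  -- the total homotopy
  set Gfun : ↥I × K → X := fun p =>
    if hp : p.2 ∈ V then
      ((Ψ (⟨(p.1 : ℝ) * νK p.2, hbound p.1 p.2 hp⟩, ⟨f p.2, hp⟩)) : X)
    else f p.2 with hGdef
  have hGcont : Continuous Gfun := by
    rw [continuous_iff_continuousAt]
    rintro ⟨t₀, z₀⟩
    by_cases hz₀ : z₀ ∈ V
    · -- continuity via the open embedding of I × V
      have hemb : IsOpenEmbedding (fun q : ↥I × ↥V => ((q.1, (q.2 : K)) : ↥I × K)) :=
        IsOpenEmbedding.id.prodMap hVopen.isOpenEmbedding_subtypeVal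
      have hcomp : Continuous fun q : ↥I × ↥V =>
          ((Ψ (⟨(q.1 : ℝ) * νK (q.2 : K), hbound q.1 q.2 q.2.2⟩, ⟨f (q.2 : K), q.2.2⟩)) : X) := by
        refine continuous_subtype_val.comp (Ψ.continuous.comp (Continuous.prodMk ?_ ?_))
        · refine Continuous.subtype_mk ?_ _
          refine Continuous.mul (continuous_subtype_val.comp continuous_fst) ?_
          rw [continuous_iff_continuousAt]
          intro q
          exact ContinuousAt.comp (hνcont (q.2 : K) q.2.2)
            (((continuous_subtype_val.comp continuous_snd).continuousAt :
              ContinuousAt (fun q : ↥I × ↥V => (q.2 : K)) q))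
        · exact Continuous.subtype_mk
            (f.continuous.comp (continuous_subtype_val.comp continuous_snd)) _
      have heq : Gfun ∘ (fun q : ↥I × ↥V => ((q.1, (q.2 : K)) : ↥I × K)) = fun q =>
          ((Ψ (⟨(q.1 : ℝ) * νK (q.2 : K), hbound q.1 q.2 q.2.2⟩, ⟨f (q.2 : K), q.2.2⟩)) : X) := by
        funext q
        exact dif_pos q.2.2
      have hpt : ((t₀, z₀) : ↥I × K) =
          (fun q : ↥I × ↥V => ((q.1, (q.2 : K)) : ↥I × K)) (t₀, ⟨z₀, hz₀⟩) := rfl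
      rw [hpt, ← hemb.continuousAt_iff, heq]
      exact hcomp.continuousAt
    · -- boundary/outside points
      have hGz₀ : Gfun (t₀, z₀) = f z₀ := dif_neg hz₀
      rw [ContinuousAt, hGz₀]
      intro U hU
      rw [mem_nhds_iff] at hU
      obtain ⟨U', hU'sub, hU'open, hfz₀U'⟩ := hU
      rw [Filter.mem_map]
      by_cases hcl : f z₀ ∈ closure ({x} : Set X)
      · have hxU' : x ∈ U' := by
          obtain ⟨w, hw1, hw2⟩ := mem_closure_iff.mp hcl U' hU'open hfz₀U'
          rwa [Set.mem_singleton_iff.mp hw2] at hw1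
        have hWU : minOpen x ⊆ U' := minOpen_subset hU'open hxU'
        refine Filter.mem_of_superset
          (IsOpen.mem_nhds (isOpen_univ.prod (hU'open.preimage f.continuous))
            ⟨trivial, hfz₀U'⟩) ?_
        rintro ⟨t, z⟩ ⟨-, hzU'⟩
        refine Set.mem_preimage.mpr (hU'sub ?_)
        by_cases hzV : z ∈ V
        · have hh : Gfun (t, z) =
              ((Ψ (⟨(t : ℝ) * νK z, hbound t z hzV⟩, ⟨f z, hzV⟩)) : X) := dif_pos hzV
          rw [hh]
          exact hWU (Ψ (⟨(t : ℝ) * νK z, hbound t z hzV⟩, ⟨f z, hzV⟩)).2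
        · have hh : Gfun (t, z) = f z := dif_neg hzV
          rw [hh]
          exact hzU'
      · have hz₀T : z₀ ∈ T := ⟨hz₀, hcl⟩
        obtain ⟨r, hrpos, hrball⟩ := hνT z₀ hz₀T
        refine Filter.mem_of_superset
          (IsOpen.mem_nhds (isOpen_univ.prod
              ((hU'open.preimage f.continuous).inter Metric.isOpen_ball))
            ⟨trivial, hfz₀U', Metric.mem_ball_self hrpos⟩) ?_
        rintro ⟨t, z⟩ ⟨-, hzU', hzball⟩
        refine Set.mem_preimage.mpr (hU'sub ?_)
        by_cases hzV : z ∈ V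
        · have hh : Gfun (t, z) =
              ((Ψ (⟨(t : ℝ) * νK z, hbound t z hzV⟩, ⟨f z, hzV⟩)) : X) := dif_pos hzV
          rw [hh]
          have hsle : (t : ℝ) * νK z < ε₀ := by
            have h1 : (t : ℝ) * νK z ≤ νK z :=
              mul_le_of_le_one_left (hν01 z hzV).1 t.2.2
            have h2 : νK z ≤ e := hrball z hzball hzV
            linarith
          have := hsmall ⟨(t : ℝ) * νK z, hbound t z hzV⟩ hsle ⟨f z, hzV⟩
          exact minOpen_subset hU'open hzU' this
        · have hh : Gfun (t, z) = f z := dif_neg hzV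
          rw [hh]
          exact hzU'
  -- assemble the homotopy
  have hmap0 : ∀ z, Gfun (0, z) = f z := by
    intro z
    by_cases hz : z ∈ V
    · have hh : Gfun (0, z) =
          ((Ψ (⟨((0:↥I) : ℝ) * νK z, hbound 0 z hz⟩, ⟨f z, hz⟩)) : X) := dif_pos hz
      rw [hh]
      have ht : (⟨((0:↥I) : ℝ) * νK z, hbound 0 z hz⟩ : ↥I) = 0 := by
        apply Subtype.ext
        show ((0:↥I) : ℝ) * νK z = ((0:↥I) : ℝ)
        have h00 : ((0:↥I) : ℝ) = 0 := rfl
        rw [h00, zero_mul]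
      rw [ht, hΨ0]
    · exact dif_neg hz
  refine ⟨⟨fun z => Gfun (1, z), hGcont.comp (Continuous.prodMk_right 1)⟩,
    ⟨⟨⟨Gfun, hGcont⟩, hmap0, fun z => rfl⟩, ?_⟩, ?_⟩
  · -- rel L
    intro t z hzL
    show Gfun (t, z) = f z
    by_cases hz : z ∈ V
    · have hh : Gfun (t, z) =
          ((Ψ (⟨(t : ℝ) * νK z, hbound t z hz⟩, ⟨f z, hz⟩)) : X) := dif_pos hz
      rw [hh]
      have ht : (⟨(t : ℝ) * νK z, hbound t z hz⟩ : ↥I) = 0 := by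
        apply Subtype.ext
        show (t : ℝ) * νK z = ((0:↥I) : ℝ)
        rw [hνL z hzL hz, mul_zero]
        rfl
      rw [ht, hΨ0]
    · exact dif_neg hz
  · -- avoidance
    intro z
    show Gfun (1, z) ≠ x
    by_cases hz : z ∈ V
    · have hh : Gfun (1, z) =
          ((Ψ (⟨((1:↥I) : ℝ) * νK z, hbound 1 z hz⟩, ⟨f z, hz⟩)) : X) := dif_pos hz
      rw [hh]
      by_cases hzA : z ∈ A
      · have ht : (⟨((1:↥I) : ℝ) * νK z, hbound 1 z hz⟩ : ↥I) = 1 := by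
          apply Subtype.ext
          show ((1:↥I) : ℝ) * νK z = ((1:↥I) : ℝ)
          rw [hνA z hzA, mul_one]
        rw [ht]
        exact hΨend ⟨f z, hz⟩
      · exact hΨpres _ ⟨f z, hz⟩ (fun hfz => hzA ((hmemA z).mpr hfz))
    · have hh : Gfun (1, z) = f z := dif_neg hz
      rw [hh]
      intro hfz
      exact hz (by rw [hVdef, Set.mem_preimage, hfz]; exact mem_minOpen_self x)

end Compress


section Aux

variable {X : Type*} [TopologicalSpace X]

/-- The boundary of the cube is closed. -/
theorem Cube.isClosed_boundary (n : ℕ) : IsClosed (Cube.boundary (Fin n)) := by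
  have : Cube.boundary (Fin n) = ⋃ i, ({y : I^(Fin n) | y i = 0} ∪ {y | y i = 1}) := by
    ext y; simp [Cube.boundary]
  rw [this]
  exact isClosed_iUnion_of_finite fun i =>
    ((isClosed_singleton.preimage (continuous_apply i)).union
      (isClosed_singleton.preimage (continuous_apply i)))

/-- The key compression lemma (Barmak–Minian): if `x` is an up weak point of a finite
`T0` space `X`, then any continuous map from a metric space into `X` avoiding `x` on a
closed set `L` is homotopic rel `L` to a map avoiding `x` altogether. -/
theorem exists_homotopyRel_avoiding
    {X : Type*} [TopologicalSpace X] [Finite X] [T0Space X] (x : X)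
    (h : ContractibleSpace {y : X | x ∈ closure ({y} : Set X) ∧ y ≠ x})
    {K : Type*} [MetricSpace K] (L : Set K) (hL : IsClosed L) (f : C(K, X))
    (hfL : ∀ z ∈ L, f z ≠ x) :
    ∃ (g : C(K, X)) (_ : f.HomotopyRel g L), ∀ z, g z ≠ x :=
  exists_homotopyRel_avoiding' x h L hL f hfL

end Aux

/-- The map induced by a continuous map on homotopy groups. -/
def HomotopyGroup.inducedMap (N : Type*) {X Y : Type*} [TopologicalSpace X]
    [TopologicalSpace Y] (f : C(X, Y)) (x : X) :
    HomotopyGroup N X x → HomotopyGroup N Y (f x) :=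
  Quotient.map
    (fun g => ⟨f.comp g.1, fun y hy => by
      simp only [ContinuousMap.comp_apply, g.2 y hy]⟩)
    (fun a b h => h.elim fun H => ⟨H.compContinuousMap f⟩)

/-- A continuous map is a weak homotopy equivalence if it induces bijections on all
homotopy groups at all basepoints (for `n = 0` this is the statement about path
components). -/
def IsWeakHomotopyEquiv {X Y : Type*} [TopologicalSpace X] [TopologicalSpace Y]
    (f : C(X, Y)) : Prop :=
  ∀ (n : ℕ) (x : X), Function.Bijective (HomotopyGroup.inducedMap (Fin n) f x)

/-- Barmak–Minian weak point removal: if `x` is an up weak point of a finite T0-space `X`,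
i.e. `↑x \ {x}` (for the specialization order) is contractible, then the inclusion
`X \ {x} ↪ X` is a weak homotopy equivalence. -/
theorem upWeakPoint_inclusion_isWeakHomotopyEquiv
    {X : Type*} [TopologicalSpace X] [Finite X] [T0Space X] (x : X)
    (h : ContractibleSpace {y : X | x ∈ closure ({y} : Set X) ∧ y ≠ x}) :
    IsWeakHomotopyEquiv
      (⟨Subtype.val, continuous_subtype_val⟩ : C({y : X // y ≠ x}, X)) := by
  intro n p
  let ι : C({y : X // y ≠ x}, X) := ⟨Subtype.val, continuous_subtype_val⟩
  constructor
  · -- injectivity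
    intro a b hab
    obtain ⟨γ₀, rfl⟩ := Quotient.exists_rep a
    obtain ⟨γ₁, rfl⟩ := Quotient.exists_rep b
    have hab' : GenLoop.Homotopic
        (⟨ι.comp γ₀.1, fun y hy => by
          simp only [ContinuousMap.comp_apply, γ₀.2 y hy]⟩ : GenLoop (Fin n) X (ι p))
        (⟨ι.comp γ₁.1, fun y hy => by
          simp only [ContinuousMap.comp_apply, γ₁.2 y hy]⟩ : GenLoop (Fin n) X (ι p)) := by
      have := hab
      simp only [HomotopyGroup.inducedMap] at this
      rw [Quotient.map_mk, Quotient.map_mk] at this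
      exact Quotient.exact this
    obtain ⟨H⟩ := hab'
    -- compress the homotopy
    set F : C(↥I × (I^(Fin n)), X) := H.toContinuousMap with hF
    set L : Set (↥I × (I^(Fin n))) :=
      {q | q.2 ∈ Cube.boundary (Fin n)} ∪ ({q | q.1 = 0} ∪ {q | q.1 = 1}) with hLdef
    have hLc : IsClosed L := by
      refine IsClosed.union ?_ (IsClosed.union ?_ ?_)
      · exact (Cube.isClosed_boundary n).preimage continuous_snd
      · exact isClosed_singleton.preimage continuous_fst
      · exact isClosed_singleton.preimage continuous_fst
    have hFL : ∀ q ∈ L, F q ≠ x := by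
      rintro ⟨t, z⟩ (hq | hq | hq)
      · have : F (t, z) = γ₀ z := H.eq_fst t hq
        rw [this]; exact (γ₀ z).2
      · simp only [Set.mem_setOf_eq] at hq
        have : F (t, z) = γ₀ z := by
          rw [hF]; simp only [ContinuousMap.HomotopyWith.coe_toContinuousMap]
          rw [hq]
          exact H.apply_zero z
        rw [this]; exact (γ₀ z).2
      · simp only [Set.mem_setOf_eq] at hq
        have : F (t, z) = γ₁ z := by
          rw [hF]; simp only [ContinuousMap.HomotopyWith.coe_toContinuousMap]
          rw [hq]
          exact H.apply_one z
        rw [this]; exact (γ₁ z).2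
    obtain ⟨G, HG, hG⟩ := exists_homotopyRel_avoiding x h L hLc F hFL
    have hGL : ∀ q ∈ L, G q = F q := by
      intro q hq
      rw [← HG.apply_one]; exact HG.eq_fst 1 hq
    refine Quotient.sound ⟨ContinuousMap.HomotopyWith.mk
      (ContinuousMap.Homotopy.mk ⟨fun q => ⟨G q, hG q⟩, G.continuous.subtype_mk _⟩ ?_ ?_) ?_⟩
    · intro z
      apply Subtype.ext
      have h0 : ((0 : ↥I), z) ∈ L := Or.inr (Or.inl rfl)
      simp only [ContinuousMap.coe_mk]
      rw [hGL _ h0]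
      show F (0, z) = _
      rw [hF]; simp only [ContinuousMap.HomotopyWith.coe_toContinuousMap]
      exact H.apply_zero z
    · intro z
      apply Subtype.ext
      have h1 : ((1 : ↥I), z) ∈ L := Or.inr (Or.inr rfl)
      simp only [ContinuousMap.coe_mk]
      rw [hGL _ h1]
      show F (1, z) = _
      rw [hF]; simp only [ContinuousMap.HomotopyWith.coe_toContinuousMap]
      exact H.apply_one z
    · intro t z hz
      apply Subtype.ext
      have hq : ((t : ↥I), z) ∈ L := Or.inl hz
      show G (t, z) = _
      rw [hGL _ hq]
      exact (H.eq_fst t hz).trans rfl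
  · -- surjectivity
    intro b
    obtain ⟨γ, rfl⟩ := Quotient.exists_rep b
    have hγL : ∀ z ∈ Cube.boundary (Fin n), (γ : C(I^(Fin n), X)) z ≠ x := by
      intro z hz
      rw [γ.2 z hz]
      exact p.2
    obtain ⟨G, HG, hG⟩ :=
      exists_homotopyRel_avoiding x h (Cube.boundary (Fin n)) (Cube.isClosed_boundary n)
        γ.1 hγL
    have hGL : ∀ q ∈ Cube.boundary (Fin n), G q = γ.1 q := by
      intro q hq
      rw [← HG.apply_one]; exact HG.eq_fst 1 hq
    refine ⟨Quotient.mk _ ⟨⟨fun z => ⟨G z, hG z⟩, G.continuous.subtype_mk _⟩, ?_⟩, ?_⟩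
    · intro z hz
      apply Subtype.ext
      show G z = _
      rw [hGL z hz]
      exact γ.2 z hz
    · simp only [HomotopyGroup.inducedMap]
      rw [Quotient.map_mk]
      refine Quotient.sound ⟨?_⟩
      have hcomp :
          (ι.comp ⟨fun z => ⟨G z, hG z⟩, G.continuous.subtype_mk _⟩ : C(I^(Fin n), X)) = G := by
        ext z; rfl
      show (ι.comp ⟨fun z => ⟨G z, hG z⟩, G.continuous.subtype_mk _⟩ :
        C(I^(Fin n), X)).HomotopyRel γ.1 (Cube.boundary (Fin n))
      rw [hcomp]
      exact HG.symm
end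

section
/- For any finite T0-space X and any beat point x ∈ X (down or up), the spaces X and X \ {x} are homotopy equivalent; consequently, by iterating, every finite T0-space is homotopy equivalent to a finite T0-space with no beat points (a minimal finite space). -/
universe u

/-- The specialization preorder: `a ≤ b` iff `a ∈ closure {b}`. -/
def SpecLe {Y : Type*} [TopologicalSpace Y] (a b : Y) : Prop :=
  a ∈ closure ({b} : Set Y)

/-- `x` is a down beat point if `↓x \ {x}` has a maximum `z`. -/
def IsDownBeatPoint {Y : Type*} [TopologicalSpace Y] (x : Y) : Prop :=
  ∃ z, z ≠ x ∧ {y : Y | SpecLe y x ∧ y ≠ x} = {y : Y | SpecLe y z}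

/-- `x` is an up beat point if `↑x \ {x}` has a minimum `z`. -/
def IsUpBeatPoint {Y : Type*} [TopologicalSpace Y] (x : Y) : Prop :=
  ∃ z, z ≠ x ∧ {y : Y | SpecLe x y ∧ y ≠ x} = {y : Y | SpecLe z y}

/-- A beat point is a down or up beat point. -/
def IsBeatPoint {Y : Type*} [TopologicalSpace Y] (x : Y) : Prop :=
  IsDownBeatPoint x ∨ IsUpBeatPoint x

lemma specLe_iff {Y : Type*} [TopologicalSpace Y] {a b : Y} : SpecLe a b ↔ b ⤳ a :=
  specializes_iff_mem_closure.symm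

lemma specLe_refl {Y : Type*} [TopologicalSpace Y] (a : Y) : SpecLe a a :=
  specLe_iff.2 (specializes_refl a)

lemma SpecLe.trans {Y : Type*} [TopologicalSpace Y] {a b c : Y}
    (h1 : SpecLe a b) (h2 : SpecLe b c) : SpecLe a c :=
  specLe_iff.2 ((specLe_iff.1 h2).trans (specLe_iff.1 h1))

/-- Two maps comparable in the specialization preorder are homotopic. -/
lemma homotopic_of_specLe {X Y : Type*} [TopologicalSpace X] [TopologicalSpace Y]
    (f g : C(X, Y)) (h : ∀ x, SpecLe (f x) (g x)) : f.Homotopic g := by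
  classical
  have hs : IsOpen {p : unitInterval × X | p.1 ≠ 0} := by
    have : {p : unitInterval × X | p.1 ≠ 0} = (Prod.fst) ⁻¹' ({0}ᶜ) := rfl
    rw [this]
    exact (isClosed_singleton.isOpen_compl).preimage continuous_fst
  refine ⟨⟨⟨({p : unitInterval × X | p.1 ≠ 0}).piecewise (fun p => g p.2) (fun p => f p.2), ?_⟩,
    ?_, ?_⟩⟩
  · exact hs.continuous_piecewise_of_specializes
      (g.continuous.comp continuous_snd) (f.continuous.comp continuous_snd)
      (fun p => specLe_iff.1 (h p.2))
  · intro x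
    simp only [ContinuousMap.coe_mk]
    exact Set.piecewise_eq_of_notMem _ _ _ (by simp)
  · intro x
    simp only [ContinuousMap.coe_mk]
    refine Set.piecewise_eq_of_mem _ _ _ ?_
    simp only [Set.mem_setOf_eq]
    exact fun h => one_ne_zero (congrArg Subtype.val h)

/-- In a finite space, a map monotone for the specialization preorder is continuous. -/
lemma continuous_of_spec_monotone {X Z : Type*} [TopologicalSpace X] [Finite X]
    [TopologicalSpace Z] {f : X → Z} (hf : ∀ a b : X, a ⤳ b → f a ⤳ f b) : Continuous f := by
  rw [continuous_def]
  intro U hU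
  rw [isOpen_iff_forall_specializes]
  intro a b hab hb
  exact (hf a b hab).mem_open hU hb

/-- Removing a beat point from a finite space yields a homotopy equivalent space. -/
lemma beat_equiv {X : Type u} [TopologicalSpace X] [Finite X] {x : X} (hx : IsBeatPoint x) :
    Nonempty (ContinuousMap.HomotopyEquiv X {y : X // y ≠ x}) := by
  classical
  obtain ⟨z, hzx, hset⟩ | ⟨z, hzx, hset⟩ := hx
  · -- down beat point
    have hz : SpecLe z x := ((Set.ext_iff.1 hset z).2 (specLe_refl z)).1
    set r : X → {y : X // y ≠ x} := fun y => if h : y = x then ⟨z, hzx⟩ else ⟨y, h⟩ with hr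
    have hmono : ∀ a b : X, a ⤳ b → (r a : X) ⤳ (r b : X) := by
      intro a b hab
      by_cases ha : a = x <;> by_cases hb : b = x <;>
        simp only [hr, ha, hb, dif_pos, dif_neg, dite_eq_ite, if_true, if_false]
      · exact specializes_refl z
      · -- a = x, b ≠ x : SpecLe b x  hence SpecLe b z
        have : SpecLe b x := specLe_iff.2 (ha ▸ hab)
        have hbz : SpecLe b z := (Set.ext_iff.1 hset b).1 ⟨this, hb⟩
        simpa [hb] using specLe_iff.1 hbz
      · -- a ≠ x, b = x : SpecLe x a, hence SpecLe z a
        have hxa : SpecLe x a := specLe_iff.2 (hb ▸ hab)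
        have : SpecLe z a := SpecLe.trans hz hxa
        simpa [ha] using specLe_iff.1 this
      · simpa [ha, hb] using hab
    have hrc : Continuous r := by
      refine continuous_of_spec_monotone (fun a b hab => ?_)
      exact (subtype_specializes_iff _ _).2 (hmono a b hab)
    refine ⟨⟨⟨r, hrc⟩, ⟨Subtype.val, continuous_subtype_val⟩, ?_, ?_⟩⟩
    · -- (val ∘ r) homotopic id
      refine homotopic_of_specLe _ _ (fun y => ?_)
      by_cases h : y = x
      · subst h; simpa [hr] using hz
      · simp [hr, h, specLe_refl]
    · -- r ∘ val = id
      have : (ContinuousMap.mk r hrc).comp ⟨Subtype.val, continuous_subtype_val⟩ =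
          ContinuousMap.id {y : X // y ≠ x} := by
        ext y
        simp [hr, y.2]
      rw [this]
  · -- up beat point
    have hz : SpecLe x z := ((Set.ext_iff.1 hset z).2 (specLe_refl z)).1
    set r : X → {y : X // y ≠ x} := fun y => if h : y = x then ⟨z, hzx⟩ else ⟨y, h⟩ with hr
    have hmono : ∀ a b : X, a ⤳ b → (r a : X) ⤳ (r b : X) := by
      intro a b hab
      by_cases ha : a = x <;> by_cases hb : b = x <;>
        simp only [hr, ha, hb, dif_pos, dif_neg, dite_eq_ite, if_true, if_false]
      · exact specializes_refl z
      · -- a = x, b ≠ x : SpecLe b x, SpecLe x z ⇒ SpecLe b z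
        have hbx : SpecLe b x := specLe_iff.2 (ha ▸ hab)
        have : SpecLe b z := SpecLe.trans hbx hz
        simpa [hb] using specLe_iff.1 this
      · -- a ≠ x, b = x : SpecLe x a, a ≠ x ⇒ SpecLe z a
        have hxa : SpecLe x a := specLe_iff.2 (hb ▸ hab)
        have : SpecLe z a := (Set.ext_iff.1 hset a).1 ⟨hxa, ha⟩
        simpa [ha] using specLe_iff.1 this
      · simpa [ha, hb] using hab
    have hrc : Continuous r := by
      refine continuous_of_spec_monotone (fun a b hab => ?_)
      exact (subtype_specializes_iff _ _).2 (hmono a b hab)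
    refine ⟨⟨⟨r, hrc⟩, ⟨Subtype.val, continuous_subtype_val⟩, ?_, ?_⟩⟩
    · refine (homotopic_of_specLe _ _ (fun y => ?_)).symm
      by_cases h : y = x
      · subst h; simpa [hr] using hz
      · simp [hr, h, specLe_refl]
    · have : (ContinuousMap.mk r hrc).comp ⟨Subtype.val, continuous_subtype_val⟩ =
          ContinuousMap.id {y : X // y ≠ x} := by
        ext y
        simp [hr, y.2]
      rw [this]

/-- Iterating beat point removal: existence of a core, by induction on cardinality. -/
lemma core_exists : ∀ (n : ℕ) (X : Type u) [TopologicalSpace X] [Finite X] [T0Space X],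
    Nat.card X ≤ n → ∃ (Y : Type u) (tY : TopologicalSpace Y), Finite Y ∧ @T0Space Y tY ∧
      (∀ y : Y, ¬ @IsBeatPoint Y tY y) ∧ Nonempty (@ContinuousMap.HomotopyEquiv X Y _ tY) := by
  intro n
  induction n with
  | zero =>
    intro X _ _ _ hcard
    have : IsEmpty X := by
      rcases Nat.card_eq_zero.1 (Nat.le_zero.1 hcard) with h | h
      · exact h
      · exact absurd ‹Finite X› h.not_finite
    exact ⟨X, ‹_›, ‹_›, ‹_›, fun y => this.elim y,
      ⟨ContinuousMap.HomotopyEquiv.refl X⟩⟩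
  | succ n ih =>
    intro X _ _ _ hcard
    by_cases h : ∀ x : X, ¬ IsBeatPoint x
    · exact ⟨X, ‹_›, ‹_›, ‹_›, h, ⟨ContinuousMap.HomotopyEquiv.refl X⟩⟩
    · push_neg at h
      obtain ⟨x, hx⟩ := h
      classical
      have : Fintype X := Fintype.ofFinite X
      have hne : Nonempty X := ⟨x⟩
      have hpos : 1 ≤ Nat.card X := Nat.card_pos
      have hcsub : Nat.card {y : X // y ≠ x} = Nat.card X - 1 := by
        simp [Nat.card_eq_fintype_card, Fintype.card_subtype_compl, Fintype.card_subtype_eq]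
      have hcard' : Nat.card {y : X // y ≠ x} ≤ n := by omega
      obtain ⟨Y, tY, h1, h2, h3, ⟨e⟩⟩ := ih {y : X // y ≠ x} hcard'
      obtain ⟨e0⟩ := beat_equiv hx
      exact ⟨Y, tY, h1, h2, h3, ⟨e0.trans e⟩⟩

/-- Stong's core theorem (existence part): removing any beat point of a finite T0-space
yields a homotopy equivalent space; consequently every finite T0-space is homotopy
equivalent to a finite T0-space with no beat points (a minimal finite space). -/
theorem stong_core {X : Type u} [TopologicalSpace X] [Finite X] [T0Space X] :
    (∀ x : X, IsBeatPoint x →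
      Nonempty (ContinuousMap.HomotopyEquiv X {y : X // y ≠ x})) ∧
    ∃ (Y : Type u) (tY : TopologicalSpace Y), Finite Y ∧ @T0Space Y tY ∧
      (∀ y : Y, ¬ @IsBeatPoint Y tY y) ∧
      Nonempty (@ContinuousMap.HomotopyEquiv X Y _ tY) := by
  exact ⟨fun x hx => beat_equiv hx, core_exists (Nat.card X) X le_rfl⟩
end

section
/- Let X be the poset on {δ, δ', H, b, c} whose comparability graph is K_{2,3} as above, together with two added maximal elements 1, 2 where ↓1 \ {1} = {δ, δ', b, c} and ↓2 \ {2} = {δ, H, b, c}. Then the order complex of this 7-element poset is contractible. -/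
open scoped Topology

/-- The underlying type of the 7-element poset `X''`: `0 = b`, `1 = c` (minimal),
`2 = δ`, `3 = δ'`, `4 = H` (middle), `5 = 1`, `6 = 2` (maximal), where
`↓1 \ {1} = {δ, δ', b, c}` and `↓2 \ {2} = {δ, H, b, c}`. -/
def X7 : Type := Fin 7

instance : DecidableEq X7 := inferInstanceAs (DecidableEq (Fin 7))
instance : Fintype X7 := inferInstanceAs (Fintype (Fin 7))

/-- The order of `X''`: `b, c` below everything else, `δ, δ' < 1` and `δ, H < 2`. -/
def x7le (a b : Fin 7) : Bool :=
  a = b || (a.val ≤ 1 && 2 ≤ b.val) ||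
    (a.val = 2 && (b.val = 5 || b.val = 6)) ||
    (a.val = 3 && b.val = 5) ||
    (a.val = 4 && b.val = 6)

instance : PartialOrder X7 where
  le a b := x7le a b = true
  le_refl a := (by decide : ∀ a : Fin 7, x7le a a = true) a
  le_trans a b c hab hbc :=
    (by decide : ∀ a b c : Fin 7, x7le a b = true → x7le b c = true → x7le a c = true)
      a b c hab hbc
  le_antisymm a b hab hba :=
    (by decide : ∀ a b : Fin 7, x7le a b = true → x7le b a = true → a = b) a b hab hba

/-- The Alexandrov (upper set) topology on `X''`; by McCord's theorem this finite space is
weak homotopy equivalent to the order complex `K(X'')`. -/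
instance : TopologicalSpace X7 := Topology.upperSet X7

/- Auxiliary lemmas -/

instance : DecidableRel ((· ≤ ·) : X7 → X7 → Prop) :=
  fun a b => decidable_of_iff (x7le a b = true) Iff.rfl

/-- Interpret a function on `Fin 7` as a self-map of `X7`. -/
def X7.v (f : Fin 7 → Fin 7) : X7 → X7 := f

lemma X7.continuous_of_monotone {f : X7 → X7} (hf : Monotone f) : Continuous f :=
  continuous_def.mpr fun U hU => (show IsUpperSet U from hU).preimage hf

open ContinuousMap in
/-- In the upper set topology, pointwise comparable continuous maps are homotopic rel
the set where they agree. -/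
lemma X7.homotopicRel_of_le {Y : Type*} [TopologicalSpace Y] {f g : C(Y, X7)}
    (hfg : ∀ y, f y ≤ g y) {S : Set Y} (hS : ∀ y ∈ S, f y = g y) :
    f.HomotopicRel g S := by
  refine ⟨{ toFun := fun p => if p.1 = 0 then f p.2 else g p.2
            continuous_toFun := ?_
            map_zero_left := fun y => by simp
            map_one_left := fun y => by
              simp only
              rw [if_neg (fun h => one_ne_zero (congrArg Subtype.val h))]
            prop' := ?_ }⟩
  · rw [continuous_def]
    intro U hU
    have hUup : IsUpperSet U := hU
    have h1 : (fun p : unitInterval × Y => if p.1 = 0 then f p.2 else g p.2) ⁻¹' U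
        = (Set.univ ×ˢ (f ⁻¹' U)) ∪ ({t : unitInterval | t ≠ 0} ×ˢ (g ⁻¹' U)) := by
      ext ⟨t, y⟩
      by_cases ht : t = 0 <;> simp [ht]
      intro hfy
      first
        | exact Or.inr (hUup (hfg y) hfy)
        | exact hUup (hfg y) hfy
    rw [h1]
    exact (isOpen_univ.prod (hU.preimage f.continuous)).union
      ((isOpen_ne).prod (hU.preimage g.continuous))
  · intro t y hy
    simp only [ContinuousMap.coe_mk]
    by_cases ht : t = 0 <;> simp [ht, hS y hy]

open Topology.Homotopy in
/-- Post-composition of a generalized loop with a monotone self-map fixing the basepoint. -/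
def X7.gstep {N : Type*} {x : X7} (γ : Ω^ N X7 x) (h : X7 → X7) (m : Monotone h)
    (hx : h x = x) : Ω^ N X7 x :=
  ⟨(⟨h, X7.continuous_of_monotone m⟩ : C(X7, X7)).comp γ.1, fun y hy => by
    simp [γ.2 y hy, hx]⟩

open Topology.Homotopy in
lemma X7.gstep_homotopic {N : Type*} {x : X7} (γ : Ω^ N X7 x) {h₁ h₂ : X7 → X7}
    (m₁ : Monotone h₁) (m₂ : Monotone h₂) (hle : ∀ a, h₁ a ≤ h₂ a)
    (hx₁ : h₁ x = x) (hx₂ : h₂ x = x) :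
    GenLoop.Homotopic (X7.gstep γ h₁ m₁ hx₁) (X7.gstep γ h₂ m₂ hx₂) := by
  apply X7.homotopicRel_of_le
  · exact fun y => hle (γ.1 y)
  · intro y hy
    show h₁ (γ.1 y) = h₂ (γ.1 y)
    rw [γ.2 y hy, hx₁, hx₂]

open Topology.Homotopy in
lemma X7.gstep_id {N : Type*} {x : X7} (γ : Ω^ N X7 x) (m : Monotone (id : X7 → X7))
    (hx : (id : X7 → X7) x = x) : X7.gstep γ id m hx = γ := by
  apply Subtype.ext; ext y; rfl

open Topology.Homotopy in
lemma X7.gstep_const {N : Type*} {x : X7} (γ : Ω^ N X7 x)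
    (m : Monotone (Function.const X7 x)) (hx : Function.const X7 x x = x) :
    X7.gstep γ (Function.const X7 x) m hx = GenLoop.const := by
  apply Subtype.ext; ext y; rfl

open Topology.Homotopy in
lemma X7.chain_contract {N : Type*} (x : X7) (γ : Ω^ N X7 x)
    (h₁ h₂ h₃ h₄ : X7 → X7) (m₁ : Monotone h₁) (m₂ : Monotone h₂)
    (m₃ : Monotone h₃) (m₄ : Monotone h₄)
    (e₁ : ∀ a, (id : X7 → X7) a ≤ h₁ a)
    (e₂ : ∀ a, h₂ a ≤ h₁ a)
    (e₃ : (∀ a, h₂ a ≤ h₃ a) ∨ (∀ a, h₃ a ≤ h₂ a))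
    (e₄ : (∀ a, h₃ a ≤ h₄ a) ∨ (∀ a, h₄ a ≤ h₃ a))
    (x₁ : h₁ x = x) (x₂ : h₂ x = x) (x₃ : h₃ x = x) (x₄ : h₄ x = x)
    (hc : h₄ = Function.const X7 x) :
    GenLoop.Homotopic γ GenLoop.const := by
  have midn : Monotone (id : X7 → X7) := monotone_id
  have s₀ : GenLoop.Homotopic γ (X7.gstep γ h₁ m₁ x₁) := by
    rw [← X7.gstep_id γ midn rfl]
    exact X7.gstep_homotopic γ midn m₁ e₁ rfl x₁
  have s₁ : GenLoop.Homotopic (X7.gstep γ h₁ m₁ x₁) (X7.gstep γ h₂ m₂ x₂) :=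
    (X7.gstep_homotopic γ m₂ m₁ e₂ x₂ x₁).symm
  have s₂ : GenLoop.Homotopic (X7.gstep γ h₂ m₂ x₂) (X7.gstep γ h₃ m₃ x₃) := by
    rcases e₃ with e | e
    · exact X7.gstep_homotopic γ m₂ m₃ e x₂ x₃
    · exact (X7.gstep_homotopic γ m₃ m₂ e x₃ x₂).symm
  have s₃ : GenLoop.Homotopic (X7.gstep γ h₃ m₃ x₃) (X7.gstep γ h₄ m₄ x₄) := by
    rcases e₄ with e | e
    · exact X7.gstep_homotopic γ m₃ m₄ e x₃ x₄
    · exact (X7.gstep_homotopic γ m₄ m₃ e x₄ x₃).symm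
  have s₄ : X7.gstep γ h₄ m₄ x₄ = GenLoop.const := by
    subst hc; exact X7.gstep_const γ m₄ x₄
  exact ((s₀.trans s₁).trans s₂).trans (s₄ ▸ s₃)

open Topology.Homotopy in
/-- Every generalized loop in `X7` is homotopic rel boundary to the constant loop:
`X7` is "strongly contractible" to each of its points, via an explicit chain of
pointwise-comparable monotone self-maps fixing the basepoint. -/
lemma X7.genLoop_homotopic_const {N : Type*} (x : X7) (γ : Ω^ N X7 x) :
    GenLoop.Homotopic γ GenLoop.const := by
  have hx : ∀ y : Fin 7, y = 0 ∨ y = 1 ∨ y = 2 ∨ y = 3 ∨ y = 4 ∨ y = 5 ∨ y = 6 := by decide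
  rcases hx x with h | h | h | h | h | h | h <;> subst h
  · exact X7.chain_contract _ γ (X7.v ![0,2,2,5,6,5,6]) (X7.v ![0,2,2,2,2,2,2])
      (X7.v ![0,2,2,2,2,2,2]) (X7.v fun _ => 0) (by decide) (by decide) (by decide)
      (by decide) (by decide) (by decide) (Or.inl (by decide)) (Or.inr (by decide))
      rfl rfl rfl rfl rfl
  · exact X7.chain_contract _ γ (X7.v ![2,1,2,5,6,5,6]) (X7.v ![2,1,2,2,2,2,2])
      (X7.v ![2,1,2,2,2,2,2]) (X7.v fun _ => 1) (by decide) (by decide) (by decide)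
      (by decide) (by decide) (by decide) (Or.inl (by decide)) (Or.inr (by decide))
      rfl rfl rfl rfl rfl
  · exact X7.chain_contract _ γ (X7.v ![2,2,2,5,6,5,6]) (X7.v ![0,1,2,2,2,2,2])
      (X7.v ![0,1,2,2,2,2,2]) (X7.v fun _ => 2) (by decide) (by decide) (by decide)
      (by decide) (by decide) (by decide) (Or.inl (by decide)) (Or.inl (by decide))
      rfl rfl rfl rfl rfl
  · exact X7.chain_contract _ γ (X7.v ![0,1,2,3,6,5,6]) (X7.v ![0,1,2,3,2,5,2])
      (X7.v ![3,3,5,3,5,5,5]) (X7.v fun _ => 3) (by decide) (by decide) (by decide)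
      (by decide) (by decide) (by decide) (Or.inl (by decide)) (Or.inr (by decide))
      rfl rfl rfl rfl rfl
  · exact X7.chain_contract _ γ (X7.v ![0,1,2,5,4,5,6]) (X7.v ![0,1,2,2,4,2,6])
      (X7.v ![4,4,6,6,4,6,6]) (X7.v fun _ => 4) (by decide) (by decide) (by decide)
      (by decide) (by decide) (by decide) (Or.inl (by decide)) (Or.inr (by decide))
      rfl rfl rfl rfl rfl
  · exact X7.chain_contract _ γ (X7.v ![2,2,2,5,6,5,6]) (X7.v ![0,1,2,5,2,5,2])
      (X7.v ![0,1,2,5,2,5,2]) (X7.v fun _ => 5) (by decide) (by decide) (by decide)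
      (by decide) (by decide) (by decide) (Or.inl (by decide)) (Or.inl (by decide))
      rfl rfl rfl rfl rfl
  · exact X7.chain_contract _ γ (X7.v ![2,2,2,5,6,5,6]) (X7.v ![0,1,2,2,6,2,6])
      (X7.v ![0,1,2,2,6,2,6]) (X7.v fun _ => 6) (by decide) (by decide) (by decide)
      (by decide) (by decide) (by decide) (Or.inl (by decide)) (Or.inl (by decide))
      rfl rfl rfl rfl rfl

/-- The order complex of the 7-element poset `X''` (K_{2,3} with two of its three square
cycles coned off) is contractible: equivalently, the weak homotopy equivalent finite model
`X''` is weakly contractible, i.e. all of its homotopy groups are trivial. -/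
theorem X7_orderComplex_contractible :
    ∀ (n : ℕ) (x : X7), Subsingleton (π_ n X7 x) := by
  intro n x
  constructor
  intro a b
  induction a using Quotient.inductionOn with | _ a =>
  induction b using Quotient.inductionOn with | _ b =>
  exact Quotient.sound
    ((X7.genLoop_homotopic_const x a).trans (X7.genLoop_homotopic_const x b).symm)
end
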